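/- The smallest nonzero eigenvalue of the discrete operator D^T D acting on mean-zero 2N-periodic sequences equals (2 sin(πh/2)/h)^2, where (Dv)_j = (v_j - v_{j-1})/h and h = 1/N. -/

import Mathlib

/-!
A `2N`-periodic sequence is a function on `ZMod (2N)`, and `h Σ (Dv)² = h⁻¹ Σ (v x - v (x - 1))²`.
The shift `x ↦ x - 1` multiplies the `k`-th discrete Fourier coefficient by `e(-k/2N)`, so by
Parseval `Σ (v x - v (x - 1))² = (2N)⁻¹ Σ_k 4 sin²(πk/2N) |v̂ k|²`. A mean-zero sequence has
`v̂ 0 = 0`, and for `k ≠ 0` the multiplier is at least `4 sin²(π/2N)`. Equality holds for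
`v x = Re e(x/2N) = cos(πx/N)`, an eigenvector of the discrete Laplacian
`2 v x - v (x - 1) - v (x + 1)` with eigenvalue `2 - 2 cos(π/N) = 4 sin²(π/2N)`; summation by
parts turns the eigenvalue equation into the equality case.
-/

open Finset Real ZMod ComplexConjugate

lemma Real.sin_sq_sub_sin_sq (x y : ℝ) : sin x ^ 2 - sin y ^ 2 = sin (x - y) * sin (x + y) := by
  rw [sin_sub, sin_add]
  linear_combination sin y ^ 2 * sin_sq_add_cos_sq x - sin x ^ 2 * sin_sq_add_cos_sq y

lemma Real.sin_sq_pi_div_le {m n : ℕ} (hm : 0 < m) (hmn : m < n) :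
    sin (π / n) ^ 2 ≤ sin (π * m / n) ^ 2 := by
  have hn : (0 : ℝ) < n := Nat.cast_pos.mpr (by omega)
  have hm' : (1 : ℝ) ≤ m := by exact_mod_cast hm
  have hmn' : (m : ℝ) + 1 ≤ n := by exact_mod_cast hmn
  have sin_pi_mul_nonneg {t : ℝ} (h₀ : 0 ≤ t) (h₁ : t ≤ 1) : 0 ≤ sin (π * t) :=
    sin_nonneg_of_nonneg_of_le_pi (by positivity) (mul_le_of_le_one_right pi_pos.le h₁)
  rw [← sub_nonneg, sin_sq_sub_sin_sq, show π * m / n - π / n = π * ((m - 1) / n) by ring,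
    show π * m / n + π / n = π * ((m + 1) / n) by ring]
  exact mul_nonneg
    (sin_pi_mul_nonneg (div_nonneg (by linarith) hn.le) ((div_le_one hn).mpr (by linarith)))
    (sin_pi_mul_nonneg (by positivity) ((div_le_one hn).mpr hmn'))

lemma Real.sin_pi_div_pos {n : ℕ} (hn : 1 < n) : 0 < sin (π / n) := by
  have hn' : (1 : ℝ) < n := by exact_mod_cast hn
  exact sin_pos_of_pos_of_lt_pi (div_pos pi_pos (by linarith)) (div_lt_self pi_pos hn')

section DiscreteLaplacian

variable {G R : Type*} [AddCommGroup G] [Fintype G] [CommRing R]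

def discreteLaplacian (a : G) (u : G → R) (x : G) : R := 2 * u x - u (x - a) - u (x + a)

lemma sum_discreteLaplacian (a : G) (u : G → R) : ∑ x, discreteLaplacian a u x = 0 := by
  have h₁ : ∑ x, u (x - a) = ∑ x, u x := Equiv.sum_comp (Equiv.subRight a) u
  have h₂ : ∑ x, u (x + a) = ∑ x, u x := Equiv.sum_comp (Equiv.addRight a) u
  simp only [discreteLaplacian, sum_sub_distrib, ← mul_sum, h₁, h₂]
  ring

lemma sum_sq_sub_eq_sum_mul_discreteLaplacian (a : G) (u : G → R) :
    ∑ x, (u x - u (x - a)) ^ 2 = ∑ x, u x * discreteLaplacian a u x := by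
  have h₁ : ∑ x, u (x - a) ^ 2 = ∑ x, u x ^ 2 := Equiv.sum_comp (Equiv.subRight a) (u · ^ 2)
  have h₂ : ∑ x, u x * u (x + a) = ∑ x, u x * u (x - a) := by
    rw [← Equiv.sum_comp (Equiv.subRight a)]
    simp [mul_comm]
  have pointwise (x : G) : (u x - u (x - a)) ^ 2 - u x * discreteLaplacian a u x =
      (u (x - a) ^ 2 - u x ^ 2) + (u x * u (x + a) - u x * u (x - a)) := by
    rw [discreteLaplacian]; ring
  rw [← sub_eq_zero, ← sum_sub_distrib, sum_congr rfl fun x _ ↦ pointwise x, sum_add_distrib,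
    sum_sub_distrib, sum_sub_distrib, h₁, h₂, sub_self, sub_self, add_zero]

lemma sum_sq_sub_of_discreteLaplacian_eq_smul {a : G} {u : G → R} {μ : R}
    (hu : discreteLaplacian a u = μ • u) :
    ∑ x, (u x - u (x - a)) ^ 2 = μ * ∑ x, u x ^ 2 := by
  simp only [sum_sq_sub_eq_sum_mul_discreteLaplacian, hu, Pi.smul_apply, smul_eq_mul, mul_sum]
  exact sum_congr rfl fun x _ ↦ by ring

lemma sum_eq_zero_of_discreteLaplacian_eq_smul [NoZeroDivisors R] {a : G} {u : G → R} {μ : R}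
    (hu : discreteLaplacian a u = μ • u) (hμ : μ ≠ 0) : ∑ x, u x = 0 := by
  have : μ * ∑ x, u x = 0 := by
    simpa only [hu, Pi.smul_apply, smul_eq_mul, ← mul_sum] using sum_discreteLaplacian a u
  exact (mul_eq_zero.mp this).resolve_left hμ

lemma discreteLaplacian_re_addChar (ψ : AddChar G ℂ) (a : G) :
    discreteLaplacian a (fun x ↦ (ψ x).re) = (2 - 2 * (ψ a).re) • fun x ↦ (ψ x).re := by
  ext x
  have : ψ (x - a) + ψ (x + a) = ψ x * (2 * (ψ a).re : ℝ) := by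
    rw [sub_eq_add_neg, AddChar.map_add_eq_mul, AddChar.map_add_eq_mul, AddChar.map_neg_eq_conj,
      ← mul_add, add_comm, Complex.add_conj]
  have hre := congrArg Complex.re this
  simp only [Complex.add_re, Complex.re_mul_ofReal] at hre
  simp only [discreteLaplacian, Pi.smul_apply, smul_eq_mul]
  linear_combination -hre

end DiscreteLaplacian

namespace ZMod

variable {N : ℕ} [NeZero N]

lemma sum_Icc_intCast {M : Type*} [AddCommMonoid M] (f : ZMod N → M) {a b : ℤ}
    (hab : b + 1 - a = N) : ∑ j ∈ Icc a b, f j = ∑ x, f x := by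
  have inj : Set.InjOn (Int.cast : ℤ → ZMod N) (Icc a b) := by
    intro j hj k hk hjk
    simp only [coe_Icc, Set.mem_Icc] at hj hk
    rw [intCast_eq_intCast_iff_dvd_sub] at hjk
    have := Int.eq_zero_of_abs_lt_dvd hjk (abs_sub_lt_iff.mpr ⟨by omega, by omega⟩)
    omega
  have image_eq : (Icc a b).image (Int.cast : ℤ → ZMod N) = univ := by
    apply eq_univ_of_card
    rw [card_image_of_injOn inj, Int.card_Icc, ZMod.card]
    omega
  rw [← sum_image inj, image_eq]

lemma dft_comp_sub {E : Type*} [AddCommGroup E] [Module ℂ E] (Φ : ZMod N → E) (a k : ZMod N) :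
    𝓕 (fun j ↦ Φ (j - a)) k = stdAddChar (-(a * k)) • 𝓕 Φ k := by
  simp only [dft_apply, smul_sum, smul_smul, ← AddChar.map_add_eq_mul]
  rw [← Equiv.sum_comp (Equiv.addRight a)]
  simp only [Equiv.coe_addRight, add_sub_cancel_right]
  exact sum_congr rfl fun j _ ↦ by ring_nf

lemma sum_norm_dft_sq (Φ : ZMod N → ℂ) : ∑ k, ‖𝓕 Φ k‖ ^ 2 = N * ∑ j, ‖Φ j‖ ^ 2 := by
  have inversion (j : ZMod N) : ∑ k, stdAddChar (j * k) * 𝓕 Φ k = N * Φ j := by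
    have := invDFT_apply (𝓕 Φ) j
    rw [dft.symm_apply_apply, smul_eq_mul] at this
    rw [this, ← mul_assoc, mul_inv_cancel₀ (NeZero.ne (N : ℂ)), one_mul]
    exact sum_congr rfl fun k _ ↦ by rw [smul_eq_mul, mul_comm k j]
  have expand (k : ZMod N) :
      𝓕 Φ k * conj (𝓕 Φ k) = ∑ j, Φ j * conj (stdAddChar (j * k) * 𝓕 Φ k) := by
    conv_lhs => enter [1]; rw [dft_apply]
    rw [sum_mul]
    refine sum_congr rfl fun j _ ↦ ?_
    rw [smul_eq_mul, map_mul, AddChar.map_neg_eq_conj]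
    ring
  apply Complex.ofReal_injective
  push_cast
  simp only [← Complex.mul_conj', expand]
  rw [sum_comm]
  simp only [← mul_sum, ← map_sum, inversion]
  simp only [map_mul, Complex.conj_natCast, mul_sum]
  exact sum_congr rfl fun j _ ↦ by ring

lemma re_stdAddChar_intCast (j : ℤ) : (stdAddChar (j : ZMod N)).re = cos (2 * π * j / N) := by
  rw [stdAddChar_coe, ← Complex.exp_ofReal_mul_I_re]
  push_cast
  ring_nf

lemma norm_one_sub_stdAddChar_sq (k : ZMod N) :
    ‖1 - stdAddChar k‖ ^ 2 = 4 * sin (π * k.val / N) ^ 2 := by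
  have : stdAddChar k = Complex.exp (Complex.I * (2 * π * k.val / N : ℝ)) := by
    rw [stdAddChar_apply, toCircle_apply]
    push_cast
    ring_nf
  rw [this, norm_sub_rev, Complex.norm_exp_I_mul_ofReal_sub_one, Real.norm_eq_abs, sq_abs]
  ring_nf

lemma four_mul_sin_sq_le_norm_one_sub_stdAddChar_sq {k : ZMod N} (hk : k ≠ 0) :
    4 * sin (π / N) ^ 2 ≤ ‖1 - stdAddChar k‖ ^ 2 := by
  rw [norm_one_sub_stdAddChar_sq]
  exact mul_le_mul_of_nonneg_left
    (sin_sq_pi_div_le (Nat.pos_of_ne_zero ((val_ne_zero k).mpr hk)) (val_lt k)) zero_le_four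

theorem discrete_wirtinger (u : ZMod N → ℝ) (hu : ∑ x, u x = 0) :
    4 * sin (π / N) ^ 2 * ∑ x, u x ^ 2 ≤ ∑ x, (u x - u (x - 1)) ^ 2 := by
  set Φ : ZMod N → ℂ := fun x ↦ u x
  have norm_sq_ofReal (r : ℝ) : ‖(r : ℂ)‖ ^ 2 = r ^ 2 := by
    rw [Complex.norm_real, Real.norm_eq_abs, sq_abs]
  have dft_diff (k : ZMod N) :
      𝓕 (fun x ↦ Φ x - Φ (x - 1)) k = (1 - stdAddChar (-k)) * 𝓕 Φ k := by
    rw [show (fun x ↦ Φ x - Φ (x - 1)) = Φ - fun x ↦ Φ (x - 1) from rfl, map_sub, Pi.sub_apply,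
      dft_comp_sub, one_mul, smul_eq_mul]
    ring
  have dft_zero : 𝓕 Φ 0 = 0 := by
    rw [dft_apply_zero]
    simp only [Φ]
    exact_mod_cast hu
  have termwise (k : ZMod N) :
      4 * sin (π / N) ^ 2 * ‖𝓕 Φ k‖ ^ 2 ≤ ‖𝓕 (fun x ↦ Φ x - Φ (x - 1)) k‖ ^ 2 := by
    rw [dft_diff, norm_mul, mul_pow]
    rcases eq_or_ne k 0 with rfl | hk
    · simp [dft_zero]
    · gcongr
      exact four_mul_sin_sq_le_norm_one_sub_stdAddChar_sq (neg_ne_zero.mpr hk)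
  have parseval := sum_le_sum fun k (_ : k ∈ univ) ↦ termwise k
  rw [← mul_sum, sum_norm_dft_sq, sum_norm_dft_sq] at parseval
  simp only [Φ, ← Complex.ofReal_sub, norm_sq_ofReal] at parseval
  have hN : (0 : ℝ) < N := Nat.cast_pos.mpr (Nat.pos_of_ne_zero (NeZero.ne N))
  rw [mul_left_comm] at parseval
  exact le_of_mul_le_mul_left parseval hN

lemma discreteLaplacian_re_stdAddChar :
    discreteLaplacian 1 (fun x : ZMod N ↦ (stdAddChar x).re) =
      (4 * sin (π / N) ^ 2) • fun x ↦ (stdAddChar x).re := by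
  rw [discreteLaplacian_re_addChar, ← Int.cast_one, re_stdAddChar_intCast, Int.cast_one,
    mul_one, mul_div_assoc, cos_two_mul_eq_one_sub]
  ring_nf

theorem exists_discrete_wirtinger_eq (hN : 1 < N) :
    ∃ u : ZMod N → ℝ, ∑ x, u x = 0 ∧ u 0 ≠ 0 ∧
      ∑ x, (u x - u (x - 1)) ^ 2 = 4 * sin (π / N) ^ 2 * ∑ x, u x ^ 2 := by
  have hμ : 4 * sin (π / N) ^ 2 ≠ 0 := by have := sin_pi_div_pos hN; positivity
  exact ⟨_, sum_eq_zero_of_discreteLaplacian_eq_smul discreteLaplacian_re_stdAddChar hμ,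
    by simp, sum_sq_sub_of_discreteLaplacian_eq_smul discreteLaplacian_re_stdAddChar⟩

end ZMod

lemma Function.Periodic.exists_eq_comp_intCast {α : Type*} {n : ℕ} {v : ℤ → α}
    (hv : Function.Periodic v n) : ∃ u : ZMod n → α, v = u ∘ Int.cast := by
  refine ⟨fun x ↦ v x.cast, funext fun j ↦ ?_⟩
  rw [Function.comp_apply, ZMod.coe_intCast, Int.emod_def, mul_comm, ← smul_eq_mul,
    hv.sub_zsmul_eq]

/-- The smallest eigenvalue of `DᵀD` on mean-zero 2N-periodic sequences is
`(2 sin(πh/2)/h)²`: the quadratic form bound holds for all such sequences, and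
it is attained by some nonzero mean-zero periodic sequence. -/
theorem smallest_eigenvalue_DTD (N : ℤ) (hN : 1 ≤ N) (h : ℝ) (hh : h = 1 / (N : ℝ)) :
    (∀ v : ℤ → ℝ, (∀ j : ℤ, v (j + 2 * N) = v j) →
      (∑ j ∈ Finset.Icc (-N + 1) N, v j = 0) →
      h * ∑ j ∈ Finset.Icc (-N + 1) N, ((v j - v (j - 1)) / h) ^ 2 ≥
        (2 * Real.sin (Real.pi * h / 2) / h) ^ 2 *
          (h * ∑ j ∈ Finset.Icc (-N + 1) N, (v j) ^ 2)) ∧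
    (∃ v : ℤ → ℝ, (∀ j : ℤ, v (j + 2 * N) = v j) ∧
      (∑ j ∈ Finset.Icc (-N + 1) N, v j = 0) ∧ (∃ j : ℤ, v j ≠ 0) ∧
      h * ∑ j ∈ Finset.Icc (-N + 1) N, ((v j - v (j - 1)) / h) ^ 2 =
        (2 * Real.sin (Real.pi * h / 2) / h) ^ 2 *
          (h * ∑ j ∈ Finset.Icc (-N + 1) N, (v j) ^ 2)) := by
  lift N to ℕ using by omega
  have : NeZero (2 * N) := ⟨by omega⟩
  have window (f : ZMod (2 * N) → ℝ) : ∑ j ∈ Icc (-(N : ℤ) + 1) N, f j = ∑ x, f x :=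
    ZMod.sum_Icc_intCast f (by push_cast; ring)
  have hh₀ : 0 < h := by rw [hh]; exact one_div_pos.mpr (by exact_mod_cast (by omega : (0 : ℤ) < N))
  have hsin : sin (π * h / 2) = sin (π / (2 * N : ℕ)) := by rw [hh]; push_cast; ring_nf
  have lhs_eq (a : ZMod (2 * N) → ℝ) : h * ∑ x, (a x / h) ^ 2 = (∑ x, a x ^ 2) / h := by
    simp only [div_pow, ← sum_div]; field_simp
  have rhs_eq (s S : ℝ) : (2 * s / h) ^ 2 * (h * S) = 4 * s ^ 2 * S / h := by field_simp; ring
  refine ⟨fun v hv hmean ↦ ?_, ?_⟩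
  · obtain ⟨u, rfl⟩ := Function.Periodic.exists_eq_comp_intCast (n := 2 * N) fun j ↦ by
      simpa using hv j
    simp only [Function.comp_apply, Int.cast_sub, Int.cast_one] at hmean ⊢
    rw [window u] at hmean
    rw [window fun x ↦ ((u x - u (x - 1)) / h) ^ 2, window fun x ↦ u x ^ 2, lhs_eq, rhs_eq, hsin]
    exact div_le_div_of_nonneg_right (ZMod.discrete_wirtinger u hmean) hh₀.le
  · obtain ⟨u, hmean, hu₀, heq⟩ := ZMod.exists_discrete_wirtinger_eq (N := 2 * N) (by omega)
    have hperiod : (2 * N : ZMod (2 * N)) = 0 := by exact_mod_cast ZMod.natCast_self (2 * N)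
    refine ⟨u ∘ Int.cast, fun j ↦ by simp [hperiod], ?_, ⟨0, by simpa using hu₀⟩, ?_⟩
    · simpa only [Function.comp_apply, window u] using hmean
    · simp only [Function.comp_apply, Int.cast_sub, Int.cast_one]
      rw [window fun x ↦ ((u x - u (x - 1)) / h) ^ 2, window fun x ↦ u x ^ 2, lhs_eq, rhs_eq, hsin,
        heq, mul_assoc]
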